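/- arXiv:1911.03348 — 4 statements merged into one kernel-verified Lean document; each statement's English description precedes it below -/
import Mathlib

section
/- Let V = ℂ² and suppose q : V → V ⊗ V is a linear map such that there exist vectors u₊, u₋ forming a basis of V with q(u₊) = u₊ ⊗ u₊ and q(u₋) = u₋ ⊗ u₋. Define Q : V^⊗L → V^⊗(L+1) by Q = Σ_{j=1}^L (-1)^j q_j, where q_j applies q to the j-th tensor factor. Then for every L ≥ 2, ker{Q : V^⊗L → V^⊗(L+1)} = im{Q : V^⊗(L-1) → V^⊗L}; i.e., the cohomology of Q vanishes in every degree L ≥ 2, and for L = 1 the kernel of Q : V → V⊗V is zero. -/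
open Matrix

noncomputable section

/-- Matrix of the operator `q_j` that applies the local supercharge (with matrix
elements `qm a b t`, i.e. `q e_t = ∑ a b, qm a b t • e_a ⊗ e_b`) on the `j`-th
tensor factor of `V^⊗L`, `V = ℂ²`. -/
def qjMat (qm : Fin 2 → Fin 2 → Fin 2 → ℂ) (L : ℕ) (j : Fin L) :
    Matrix (Fin (L + 1) → Fin 2) (Fin L → Fin 2) ℂ := fun s s' =>
  if ∀ i : Fin L, i ≠ j → s (Fin.succAbove j.succ i) = s' i then
    qm (s j.castSucc) (s j.succ) (s' j)
  else 0

/-- The supercharge `Q = ∑_{j=1}^L (-1)^j q_j : V^⊗L → V^⊗(L+1)`. -/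
def Qop (qm : Fin 2 → Fin 2 → Fin 2 → ℂ) (L : ℕ) :
    ((Fin L → Fin 2) → ℂ) →ₗ[ℂ] ((Fin (L + 1) → Fin 2) → ℂ) :=
  (∑ j : Fin L, ((-1 : ℂ) ^ ((j : ℕ) + 1)) • qjMat qm L j).mulVecLin

/-!
Let `B` be the matrix whose columns are `u₊, u₋`. Since `q` sends each column of `B` to its
tensor square, conjugation by the Kronecker powers of `B` turns `Q` into the model supercharge of
`q eₐ = eₐ ⊗ eₐ`. On words in the letters `0, 1` the model `Q` sends `w` to the alternating sum of
the words obtained by doubling one letter of `w`, and `Q² = 0` is the simplicial identity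
`σⱼ σᵢ = σᵢ σⱼ₊₁` (`i ≤ j`). Grouping words by their sequence of runs splits the model complex
into tensor products of one-run complexes `ℂ → ℂ → ℂ → ⋯` whose maps are alternately `-1` and `0`.
Contracting the first factor gives the homotopy `h w = -(tail w)` when the first run of `w` has
even length and `h w = 0` otherwise, so `hQ + Qh = 1` and `ker Q = im Q` in every degree. In
degree one this reads `ker Q = 0`, since `Q = 0` on `V^⊗0`.
-/

open Finset Function

namespace Supercharge

section KroneckerPower

variable {R n ι : Type*} [CommSemiring R] [Fintype ι]

def kronPow (B : Matrix n n R) (ι : Type*) [Fintype ι] : Matrix (ι → n) (ι → n) R :=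
  of fun s t => ∏ i, B (s i) (t i)

lemma kronPow_mul [Fintype n] [DecidableEq ι] (B C : Matrix n n R) :
    kronPow B ι * kronPow C ι = kronPow (B * C) ι := by
  ext s u
  simp only [kronPow, mul_apply, of_apply, ← prod_mul_distrib]
  exact (Fintype.prod_sum fun i j => B (s i) j * C j (u i)).symm

lemma kronPow_one [DecidableEq n] [DecidableEq ι] : kronPow (1 : Matrix n n R) ι = 1 := by
  ext s t
  simp [kronPow, one_apply, prod_boole, funext_iff]

end KroneckerPower

lemma ker_mulVecLin_eq_range_of_homotopy {R l m n : Type*} [CommSemiring R] [Fintype l]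
    [Fintype m] [DecidableEq m] [Fintype n] {d₀ : Matrix m l R} {d₁ : Matrix n m R}
    (h₀ : Matrix l m R) (h₁ : Matrix m n R) (hd : d₁ * d₀ = 0) (hh : h₁ * d₁ + d₀ * h₀ = 1) :
    LinearMap.ker d₁.mulVecLin = LinearMap.range d₀.mulVecLin := by
  apply le_antisymm
  · intro x hx
    have hx : d₁ *ᵥ x = 0 := hx
    refine ⟨h₀ *ᵥ x, ?_⟩
    calc d₀.mulVecLin (h₀ *ᵥ x) = (h₁ * d₁ + d₀ * h₀) *ᵥ x := by
          simp [add_mulVec, ← mulVec_mulVec, hx]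
      _ = x := by rw [hh, one_mulVec]
  · rintro _ ⟨y, rfl⟩
    simp [LinearMap.mem_ker, mulVec_mulVec, hd]

lemma mul_mul_mul_mul_of_mul_eq_one {R i k l m n o : Type*} [CommSemiring R] [Fintype k]
    [Fintype l] [DecidableEq l] [Fintype m] [Fintype n] {C : Matrix l m R} {P : Matrix m l R}
    (h : C * P = 1)
    (A : Matrix i k R) (X : Matrix k l R) (Y : Matrix l n R) (D : Matrix n o R) :
    A * X * C * (P * Y * D) = A * (X * Y) * D := by
  simp only [Matrix.mul_assoc]
  rw [← Matrix.mul_assoc C, h, Matrix.one_mul]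

lemma sum_ite_forall_ne_eq_sum_update {ι α M : Type*} [Fintype ι] [DecidableEq ι] [Fintype α]
    [AddCommMonoid M] (g : ι → α) (j : ι) (F : (ι → α) → M)
    [∀ t : ι → α, Decidable (∀ i, i ≠ j → g i = t i)] :
    ∑ t : ι → α, (if ∀ i, i ≠ j → g i = t i then F t else 0) = ∑ x, F (update g j x) := by
  have update_eq (t : ι → α) (ht : ∀ i, i ≠ j → g i = t i) : update g j (t j) = t := by
    simpa [update_eq_iff] using fun i hi => ht i hi
  rw [← sum_filter]
  refine sum_nbij' (fun t => t j) (update g j) (by simp) ?_ (fun t ht => ?_) (by simp)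
    (fun t ht => ?_)
  · simp +contextual [update_of_ne]
  · exact update_eq t (mem_filter.1 ht).2
  · rw [update_eq t (mem_filter.1 ht).2]

lemma val_predAbove {n : ℕ} (j : Fin n) (k : Fin (n + 1)) :
    (j.predAbove k : ℕ) = if (j : ℕ) < k then (k : ℕ) - 1 else k := by
  rcases lt_or_ge (j : ℕ) k with h | h
  · rw [Fin.predAbove_of_castSucc_lt _ _ (by simpa [Fin.lt_def] using h), Fin.val_pred, if_pos h]
  · rw [Fin.predAbove_of_le_castSucc _ _ (by simpa [Fin.le_def] using h), Fin.coe_castPred,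
      if_neg (by omega)]

lemma predAbove_succ_succAbove {L : ℕ} (j i : Fin L) : j.predAbove (j.succ.succAbove i) = i := by
  rcases le_or_gt i j with h | h
  · rw [Fin.succAbove_succ_of_le _ _ h, Fin.predAbove_castSucc_of_le _ _ h]
  · rw [Fin.succAbove_succ_of_lt _ _ h, Fin.predAbove_succ_of_le _ _ h.le]

lemma eq_comp_predAbove_iff {α : Type*} {L : ℕ} (j : Fin L) (t : Fin (L + 1) → α)
    (w : Fin L → α) :
    t = w ∘ j.predAbove ↔ t j.succ = w j ∧ ∀ i, t (j.succ.succAbove i) = w i := by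
  simp [funext_iff, j.succ.forall_iff_succAbove, predAbove_succ_succAbove]

lemma predAbove_predAbove_castSucc {n : ℕ} {i j : Fin (n + 1)} (h : i ≤ j) (k : Fin (n + 3)) :
    j.predAbove (i.castSucc.predAbove k) = i.predAbove (j.succ.predAbove k) := by
  simpa [SimplexCategory.σ] using
    congrArg (fun f => f.toOrderHom k) (SimplexCategory.σ_comp_σ h)

def qDiag : Fin 2 → Fin 2 → Fin 2 → ℂ := fun a b t => if a = t ∧ b = t then 1 else 0

lemma qjMat_qDiag {L : ℕ} (j : Fin L) (t : Fin (L + 1) → Fin 2) (w : Fin L → Fin 2) :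
    qjMat qDiag L j t w = if t = w ∘ j.predAbove then 1 else 0 := by
  have : t = w ∘ j.predAbove ↔
      (∀ i, i ≠ j → t (j.succ.succAbove i) = w i) ∧ t j.castSucc = w j ∧ t j.succ = w j := by
    rw [eq_comp_predAbove_iff]
    constructor
    · rintro ⟨hs, h⟩
      exact ⟨fun i _ => h i, by simpa using h j, hs⟩
    · rintro ⟨h, hc, hs⟩
      refine ⟨hs, fun i => ?_⟩
      rcases eq_or_ne i j with rfl | hi
      · simpa using hc
      · exact h i hi
  simp only [qjMat, qDiag, this, ite_and]

lemma qjMat_mul_kronPow (qm : Fin 2 → Fin 2 → Fin 2 → ℂ) (B : Matrix (Fin 2) (Fin 2) ℂ)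
    (hq : ∀ a b c, ∑ x, qm a b x * B x c = B a c * B b c) (L : ℕ) (j : Fin L) :
    qjMat qm L j * kronPow B (Fin L) = kronPow B (Fin (L + 1)) * qjMat qDiag L j := by
  ext s w
  set g : Fin L → Fin 2 := s ∘ j.succ.succAbove
  have prod_update (x : Fin 2) : ∏ i, B (update g j x i) (w i) =
      B x (w j) * ∏ i ∈ {j}ᶜ, B (g i) (w i) := by
    rw [Fintype.prod_eq_mul_prod_compl j, update_self]
    congr 1
    exact prod_congr rfl fun i hi => by rw [update_of_ne (by simpa using hi)]
  calc (qjMat qm L j * kronPow B (Fin L)) s w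
      = ∑ x, qm (s j.castSucc) (s j.succ) x * ∏ i, B (update g j x i) (w i) := by
        simp only [mul_apply, qjMat, kronPow, of_apply, ite_mul, zero_mul]
        refine (sum_ite_forall_ne_eq_sum_update g j fun t =>
          qm (s j.castSucc) (s j.succ) (t j) * ∏ i, B (t i) (w i)).trans ?_
        simp only [update_self]
    _ = B (s j.castSucc) (w j) * B (s j.succ) (w j) * ∏ i ∈ {j}ᶜ, B (g i) (w i) := by
        simp_rw [prod_update, ← mul_assoc, ← sum_mul, hq]
    _ = (kronPow B (Fin (L + 1)) * qjMat qDiag L j) s w := by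
        simp only [mul_apply, qjMat_qDiag, mul_ite, mul_one, mul_zero, sum_ite_eq', mem_univ,
          if_true, kronPow, of_apply]
        rw [Fin.prod_univ_succAbove _ j.succ, Fintype.prod_eq_mul_prod_compl j]
        simp [g, predAbove_succ_succAbove]
        ring

def qMat (qm : Fin 2 → Fin 2 → Fin 2 → ℂ) (L : ℕ) :
    Matrix (Fin (L + 1) → Fin 2) (Fin L → Fin 2) ℂ :=
  ∑ j : Fin L, ((-1 : ℂ) ^ ((j : ℕ) + 1)) • qjMat qm L j

lemma qMat_mul_kronPow (qm : Fin 2 → Fin 2 → Fin 2 → ℂ) (B : Matrix (Fin 2) (Fin 2) ℂ)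
    (hq : ∀ a b c, ∑ x, qm a b x * B x c = B a c * B b c) (L : ℕ) :
    qMat qm L * kronPow B (Fin L) = kronPow B (Fin (L + 1)) * qMat qDiag L := by
  simp only [qMat, Matrix.sum_mul, Matrix.mul_sum, Matrix.smul_mul, Matrix.mul_smul,
    qjMat_mul_kronPow qm B hq]

lemma Qop_zero (qm : Fin 2 → Fin 2 → Fin 2 → ℂ) : Qop qm 0 = 0 := by
  simp [Qop]

lemma qMat_qDiag_apply (L : ℕ) (t : Fin (L + 1) → Fin 2) (w : Fin L → Fin 2) :
    qMat qDiag L t w =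
      ∑ j : Fin L, (-1 : ℂ) ^ ((j : ℕ) + 1) * if t = w ∘ j.predAbove then 1 else 0 := by
  simp [qMat, Matrix.sum_apply, qjMat_qDiag]

lemma qMat_qDiag_mul_qMat_qDiag (L : ℕ) : qMat qDiag (L + 1) * qMat qDiag L = 0 := by
  rcases L with _ | n
  · simp [qMat]
  ext s w
  set T : Fin (n + 2) × Fin (n + 1) → ℂ := fun p =>
    (-1) ^ ((p.1 : ℕ) + 1) * (-1) ^ ((p.2 : ℕ) + 1) *
      if s = w ∘ p.2.predAbove ∘ p.1.predAbove then 1 else 0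
  have hT : (qMat qDiag (n + 2) * qMat qDiag (n + 1)) s w = ∑ p, T p := by
    simp only [T, mul_apply, qMat_qDiag_apply, sum_mul_sum, Fintype.sum_prod_type]
    rw [sum_comm]
    refine sum_congr rfl fun a _ => ?_
    rw [sum_comm]
    refine sum_congr rfl fun b _ => ?_
    simp [mul_ite, sum_ite_eq', Function.comp_assoc]
  rw [hT, Matrix.zero_apply]
  set S : Finset (Fin (n + 2) × Fin (n + 1)) := {p | (p.1 : ℕ) ≤ p.2}
  -- On `S` the simplicial identity rewrites each term as minus a term outside `S`.
  have hcancel : ∀ p ∈ S, T p = -T (p.2.succ, (Fin.last n).predAbove p.1) := by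
    rintro ⟨a, b⟩ h
    simp only [S, mem_filter, mem_univ, true_and] at h
    obtain ⟨i, rfl⟩ : ∃ i : Fin (n + 1), i.castSucc = a := ⟨⟨a, by omega⟩, rfl⟩
    have hw : w ∘ b.predAbove ∘ i.castSucc.predAbove = w ∘ i.predAbove ∘ b.succ.predAbove :=
      funext fun k => congrArg w (predAbove_predAbove_castSucc (Fin.le_def.2 h) k)
    simp only [T, Fin.predAbove_last_castSucc, hw, Fin.val_succ, Fin.val_castSucc]
    split_ifs <;> ring
  rw [← sum_add_sum_compl S, add_eq_zero_iff_eq_neg, ← sum_neg_distrib]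
  refine sum_nbij' (fun p => (p.2.succ, (Fin.last n).predAbove p.1))
    (fun p => (p.2.castSucc, (0 : Fin (n + 1)).predAbove p.1)) ?_ ?_ ?_ ?_ hcancel
  all_goals
    rintro ⟨a, b⟩ h
    simp only [S, mem_compl, mem_filter, mem_univ, true_and, Prod.ext_iff, Fin.ext_iff,
      Fin.val_succ, Fin.val_castSucc, val_predAbove, Fin.val_last, Fin.val_zero] at h ⊢
    have := a.isLt
    have := b.isLt
    grind

section RunLength

variable {α : Type*} [DecidableEq α] {n : ℕ}

def runLength (t : Fin (n + 1) → α) : ℕ :=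
  Nat.find (⟨n + 1, fun h => absurd h (lt_irrefl _)⟩ : ∃ c, ∀ h : c < n + 1, t ⟨c, h⟩ ≠ t 0)

lemma lt_runLength_iff (t : Fin (n + 1) → α) (k : Fin (n + 1)) :
    (k : ℕ) < runLength t ↔ ∀ i ≤ k, t i = t 0 := by
  rw [runLength, Nat.lt_find_iff]
  refine ⟨fun h i hi => ?_, fun h c hc => ?_⟩
  · exact (not_forall_not.1 (h i hi)).2
  · push Not
    exact ⟨by omega, h ⟨c, by omega⟩ (Fin.le_def.2 hc)⟩

lemma runLength_le (t : Fin (n + 1) → α) : runLength t ≤ n + 1 :=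
  Nat.find_min' _ fun h => absurd h (lt_irrefl _)

lemma runLength_pos (t : Fin (n + 1) → α) : 0 < runLength t :=
  (lt_runLength_iff t 0).2 fun i hi => by rw [Fin.le_zero_iff.1 hi]

lemma runLength_eq_of_forall_lt_iff (t : Fin (n + 1) → α) {c : ℕ} (hc : c ≤ n + 1)
    (h : ∀ k : Fin (n + 1), (k : ℕ) < runLength t ↔ (k : ℕ) < c) : runLength t = c := by
  have := runLength_le t
  by_contra hne
  rcases lt_or_gt_of_ne hne with hlt | hlt
  · exact lt_irrefl _ ((h ⟨runLength t, by omega⟩).2 hlt)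
  · exact lt_irrefl _ ((h ⟨c, by omega⟩).1 hlt)

lemma lt_runLength_comp_iff {m : ℕ} (w : Fin (n + 1) → α) {f : Fin (m + 1) → Fin (n + 1)}
    (hmono : Monotone f) (hsurj : Surjective f) (k : Fin (m + 1)) :
    (k : ℕ) < runLength (w ∘ f) ↔ (f k : ℕ) < runLength w := by
  have hf0 : f 0 = 0 := by
    obtain ⟨i, hi⟩ := hsurj 0
    exact le_antisymm (hi ▸ hmono (Fin.zero_le i)) (Fin.zero_le _)
  simp only [lt_runLength_iff, Function.comp_apply, hf0]
  refine ⟨fun h i hi => ?_, fun h i hi => h _ (hmono hi)⟩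
  obtain ⟨i', rfl⟩ := hsurj i
  rcases le_or_gt i' k with hik | hik
  · exact h i' hik
  · rw [le_antisymm hi (hmono hik.le)]
    exact h k le_rfl

lemma runLength_comp_predAbove (w : Fin (n + 1) → α) (j : Fin (n + 1)) :
    runLength (w ∘ j.predAbove) =
      if (j : ℕ) < runLength w then runLength w + 1 else runLength w := by
  have := runLength_le w
  refine runLength_eq_of_forall_lt_iff _ (by split_ifs <;> omega) fun k => ?_
  rw [lt_runLength_comp_iff w (Fin.predAbove_right_monotone j) (Fin.predAbove_surjective j),
    val_predAbove]
  split_ifs <;> omega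

lemma tail_comp_predAbove_of_lt_runLength (w : Fin (n + 1) → α) (i : Fin n)
    (h : (i : ℕ) + 1 < runLength w) : Fin.tail w ∘ i.predAbove = w := by
  funext k
  have hrun (x : Fin (n + 1)) (hx : (x : ℕ) ≤ i + 1) : w x = w 0 :=
    (lt_runLength_iff w x).1 (by omega) x le_rfl
  simp only [Function.comp_apply, Fin.tail]
  rcases le_or_gt (k : ℕ) i with hk | hk
  · rw [hrun _ (by rw [Fin.val_succ, val_predAbove]; split_ifs <;> omega), hrun k (by omega)]
  · congr 1
    ext
    rw [Fin.val_succ, val_predAbove, if_pos hk]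
    omega

end RunLength

def hMat (L : ℕ) : Matrix (Fin L → Fin 2) (Fin (L + 1) → Fin 2) ℂ :=
  of fun s t => if Even (runLength t) ∧ s = Fin.tail t then -1 else 0

lemma tail_comp_predAbove_zero {α : Type*} {n : ℕ} (w : Fin (n + 1) → α) :
    Fin.tail (w ∘ (0 : Fin (n + 1)).predAbove) = w := by
  funext k
  simp [Fin.tail]

lemma tail_comp_predAbove_succ {α : Type*} {n : ℕ} (w : Fin (n + 1) → α) (i : Fin n) :
    Fin.tail (w ∘ i.succ.predAbove) = Fin.tail w ∘ i.predAbove := by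
  funext k
  simp [Fin.tail, Fin.succ_predAbove_succ]

lemma hMat_mul_qMat_apply (L : ℕ) (s w : Fin (L + 1) → Fin 2) :
    (hMat (L + 1) * qMat qDiag (L + 1)) s w = ∑ a : Fin (L + 1), (-1) ^ ((a : ℕ) + 1) *
      if Even (runLength (w ∘ a.predAbove)) ∧ s = Fin.tail (w ∘ a.predAbove) then -1 else 0 := by
  simp only [mul_apply, qMat_qDiag_apply, mul_sum]
  rw [sum_comm]
  refine sum_congr rfl fun a _ => ?_
  simp [hMat, mul_ite, sum_ite_eq', mul_comm]

lemma qMat_mul_hMat_apply (L : ℕ) (s w : Fin (L + 1) → Fin 2) :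
    (qMat qDiag L * hMat L) s w = (if Even (runLength w) then -1 else 0) *
      ∑ i : Fin L, (-1) ^ ((i : ℕ) + 1) * if s = Fin.tail w ∘ i.predAbove then 1 else 0 := by
  rw [mul_apply, sum_eq_single (Fin.tail w), mul_comm]
  · simp [hMat, qMat_qDiag_apply]
  · intro t _ ht
    simp [hMat, ht]
  · simp

lemma sum_fin_ite_lt_eq_sum_range {M : Type*} [AddCommMonoid M] {L c : ℕ} (hc : c ≤ L)
    (f : ℕ → M) :
    ∑ i : Fin L, (if (i : ℕ) < c then f i else 0) = ∑ i ∈ range c, f i := by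
  rw [Fin.sum_univ_eq_sum_range (fun i => if i < c then f i else 0), ← sum_filter]
  congr 1
  ext i
  simp only [mem_filter, mem_range]
  omega

lemma hMat_mul_qMat_add_qMat_mul_hMat (L : ℕ) :
    hMat (L + 1) * qMat qDiag (L + 1) + qMat qDiag L * hMat L = 1 := by
  ext s w
  set m := runLength w with hm
  have hm_le : m ≤ L + 1 := runLength_le w
  obtain ⟨k, hk⟩ : ∃ k, m = k + 1 := Nat.exists_eq_add_one.2 (runLength_pos w)
  -- Term `i + 1` of `hQ` cancels term `i` of `Qh` unless `i + 1` lies in the first run of `w`.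
  have hterm (i : Fin L) :
      (-1 : ℂ) ^ ((i.succ : ℕ) + 1) * (if Even (runLength (w ∘ i.succ.predAbove)) ∧
          s = Fin.tail (w ∘ i.succ.predAbove) then -1 else 0) +
        (if Even m then -1 else 0) *
          ((-1) ^ ((i : ℕ) + 1) * if s = Fin.tail w ∘ i.predAbove then 1 else 0) =
      if (i : ℕ) < k then (if Even m then 1 else -1) * (if s = w then 1 else 0) * (-1) ^ (i : ℕ)
        else 0 := by
    rw [runLength_comp_predAbove, tail_comp_predAbove_succ, Fin.val_succ, ← hm]
    by_cases hi : (i : ℕ) < k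
    · have him : (i : ℕ) + 1 < m := by omega
      rw [if_pos him, if_pos hi, tail_comp_predAbove_of_lt_runLength w i him]
      by_cases he : Even m <;> by_cases hs : s = w <;> simp [he, hs, Nat.even_add_one, pow_succ]
    · rw [if_neg (show ¬(i : ℕ) + 1 < m by omega), if_neg hi]
      by_cases he : Even m <;> simp only [he, true_and, false_and, if_false] <;> split_ifs <;> ring
  rw [Matrix.add_apply, one_apply, hMat_mul_qMat_apply, qMat_mul_hMat_apply, ← hm,
    Fin.sum_univ_succ, mul_sum, add_assoc, ← sum_add_distrib]
  simp only [hterm]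
  rw [sum_fin_ite_lt_eq_sum_range (by omega) fun i =>
      (if Even m then 1 else -1) * (if s = w then 1 else 0) * (-1 : ℂ) ^ i,
    ← mul_sum, neg_one_geom_sum, runLength_comp_predAbove, tail_comp_predAbove_zero, Fin.val_zero,
    ← hm, if_pos (runLength_pos w), hk]
  by_cases hs : s = w <;> by_cases he : Even k <;> simp [hs, he, Nat.even_add_one]

theorem ker_Qop_succ_eq_range (qm : Fin 2 → Fin 2 → Fin 2 → ℂ) (B : Matrix (Fin 2) (Fin 2) ℂ)
    (hB : IsUnit B) (hq : ∀ a b c, ∑ x, qm a b x * B x c = B a c * B b c) (L : ℕ) :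
    LinearMap.ker (Qop qm (L + 1)) = LinearMap.range (Qop qm L) := by
  have hdet : IsUnit B.det := B.isUnit_iff_isUnit_det.1 hB
  set P := fun n => kronPow B (Fin n)
  set C := fun n => kronPow B⁻¹ (Fin n)
  have hPC (n : ℕ) : P n * C n = 1 := by
    simp [P, C, kronPow_mul, mul_nonsing_inv B hdet, kronPow_one]
  have hCP (n : ℕ) : C n * P n = 1 := by
    simp [P, C, kronPow_mul, nonsing_inv_mul B hdet, kronPow_one]
  have hQ (n : ℕ) : qMat qm n = P (n + 1) * qMat qDiag n * C n := by
    rw [← qMat_mul_kronPow qm B hq, Matrix.mul_assoc, hPC, Matrix.mul_one]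
  refine ker_mulVecLin_eq_range_of_homotopy (d₀ := qMat qm L) (d₁ := qMat qm (L + 1))
    (P L * hMat L * C (L + 1)) (P (L + 1) * hMat (L + 1) * C (L + 2)) ?_ ?_
  · rw [hQ, hQ, mul_mul_mul_mul_of_mul_eq_one (hCP _), qMat_qDiag_mul_qMat_qDiag,
      Matrix.mul_zero, Matrix.zero_mul]
  · rw [hQ, hQ, mul_mul_mul_mul_of_mul_eq_one (hCP _), mul_mul_mul_mul_of_mul_eq_one (hCP _),
      ← Matrix.add_mul, ← Matrix.mul_add, hMat_mul_qMat_add_qMat_mul_hMat, Matrix.mul_one, hPC]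

end Supercharge

/-- if `q u₊ = u₊ ⊗ u₊` and `q u₋ = u₋ ⊗ u₋` for a basis `u₊, u₋` of `ℂ²`,
then `ker Q = 0` for `L = 1` and `ker Q = im Q` in every degree `L ≥ 2`. -/
theorem stmt0 (qm : Fin 2 → Fin 2 → Fin 2 → ℂ) (up um : Fin 2 → ℂ)
    (hbasis : LinearIndependent ℂ ![up, um])
    (hup : ∀ a b : Fin 2, ∑ t : Fin 2, qm a b t * up t = up a * up b)
    (hum : ∀ a b : Fin 2, ∑ t : Fin 2, qm a b t * um t = um a * um b) :
    LinearMap.ker (Qop qm 1) = ⊥ ∧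
      ∀ L : ℕ, 1 ≤ L →
        LinearMap.ker (Qop qm (L + 1)) = LinearMap.range (Qop qm L) := by
  set B : Matrix (Fin 2) (Fin 2) ℂ := of fun x c => ![up, um] c x
  have hB : IsUnit B := linearIndependent_cols_iff_isUnit.1 hbasis
  have hq : ∀ a b c, ∑ x, qm a b x * B x c = B a c * B b c := by
    intro a b c
    fin_cases c
    exacts [hup a b, hum a b]
  have hexact := Supercharge.ker_Qop_succ_eq_range qm B hB hq
  refine ⟨?_, fun L _ => hexact L⟩
  rw [hexact 0, Supercharge.Qop_zero, LinearMap.range_zero]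
end
end

section
/- Let V = ℂ² and suppose q : V → V ⊗ V is a linear map such that there exist vectors u₊, u₋ forming a basis of V with q(u₊) = u₊ ⊗ u₊ and q(u₋) = u₊ ⊗ u₋ + u₋ ⊗ u₊. Define Q : V^⊗L → V^⊗(L+1) by Q = Σ_{j=1}^L (-1)^j q_j. Then for every L ≥ 2, ker{Q : V^⊗L → V^⊗(L+1)} = im{Q : V^⊗(L-1) → V^⊗L}, and for L = 1 the kernel of Q : V → V⊗V is zero. -/
open Matrix

noncomputable section

namespace SUSY

variable (qm : Fin 2 → Fin 2 → Fin 2 → ℂ) (eps : Fin 2 → ℂ)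

def QM (L : ℕ) : Matrix (Fin (L + 1) → Fin 2) (Fin L → Fin 2) ℂ :=
  ∑ j : Fin L, ((-1 : ℂ) ^ ((j : ℕ) + 1)) • qjMat qm L j

def qf (n : ℕ) : Matrix (Fin (n + 2) → Fin 2) (Fin (n + 1) → Fin 2) ℂ := fun s s' =>
  if Fin.tail (Fin.tail s) = Fin.tail s' then qm (s 0) (s 1) (s' 0) else 0

def oneT {m n : ℕ} (A : Matrix (Fin m → Fin 2) (Fin n → Fin 2) ℂ) :
    Matrix (Fin (m + 1) → Fin 2) (Fin (n + 1) → Fin 2) ℂ := fun s s' =>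
  if s 0 = s' 0 then A (Fin.tail s) (Fin.tail s') else 0

def EM (n : ℕ) : Matrix (Fin n → Fin 2) (Fin (n + 1) → Fin 2) ℂ := fun s s' =>
  if Fin.tail s' = s then eps (s' 0) else 0

lemma sum_cons {n : ℕ} (g : (Fin (n + 1) → Fin 2) → ℂ) :
    ∑ s, g s = ∑ a : Fin 2, ∑ w : Fin n → Fin 2, g (Fin.cons a w) := by
  rw [← Equiv.sum_comp (Fin.consEquiv fun _ => Fin 2) g, Fintype.sum_prod_type]
  rfl

lemma QM_zero : QM qm 0 = 0 := by
  simp [QM]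

lemma QM_succ (L : ℕ) : QM qm (L + 1) = -(qf qm L) - oneT (QM qm L) := by
  have h0 : qjMat qm (L + 1) 0 = qf qm L := by
    ext s s'
    have hc : (∀ i : Fin (L + 1), i ≠ 0 → s (Fin.succAbove (Fin.succ 0) i) = s' i) ↔
        Fin.tail (Fin.tail s) = Fin.tail s' := by
      constructor
      · intro h
        funext m
        have := h m.succ (Fin.succ_ne_zero m)
        rwa [Fin.succ_succAbove_succ, Fin.succAbove_zero] at this
      · intro h i hi
        obtain ⟨m, rfl⟩ := Fin.eq_succ_of_ne_zero hi
        rw [Fin.succ_succAbove_succ, Fin.succAbove_zero]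
        exact congrFun h m
    simp only [qjMat, qf, hc]
    rfl
  have hsucc : ∀ k : Fin L, qjMat qm (L + 1) k.succ = oneT (qjMat qm L k) := by
    intro k
    ext s s'
    have hc : (∀ i : Fin (L + 1), i ≠ k.succ → s (Fin.succAbove k.succ.succ i) = s' i) ↔
        (s 0 = s' 0 ∧ ∀ m : Fin L, m ≠ k → Fin.tail s (Fin.succAbove k.succ m) = Fin.tail s' m) := by
      constructor
      · intro h
        refine ⟨?_, ?_⟩
        · have := h 0 (Fin.succ_ne_zero k).symm
          rwa [Fin.succ_succAbove_zero] at this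
        · intro m hm
          have := h m.succ (by simpa [Fin.succ_inj] using hm)
          rwa [Fin.succ_succAbove_succ] at this
      · rintro ⟨h0, h⟩ i hi
        rcases Fin.eq_zero_or_eq_succ i with rfl | ⟨m, rfl⟩
        · rwa [Fin.succ_succAbove_zero]
        · rw [Fin.succ_succAbove_succ]
          exact h m (by simpa [Fin.succ_inj] using hi)
    simp only [qjMat, oneT, hc]
    by_cases h0 : s 0 = s' 0
    · by_cases hrest : ∀ m : Fin L, m ≠ k → Fin.tail s (Fin.succAbove k.succ m) = Fin.tail s' m
      · have e1 : s (Fin.castSucc k.succ) = Fin.tail s (Fin.castSucc k) := by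
          show s k.succ.castSucc = s k.castSucc.succ
          rw [Fin.succ_castSucc]
        rw [if_pos ⟨h0, hrest⟩, if_pos h0, if_pos hrest, e1]
        rfl
      · rw [if_neg (fun hx => hrest hx.2), if_pos h0, if_neg hrest]
    · rw [if_neg (fun hx => h0 hx.1), if_neg h0]
  rw [QM, Fin.sum_univ_succ, h0]
  have : ∀ k : Fin L, ((-1 : ℂ) ^ ((k.succ : ℕ) + 1)) • qjMat qm (L + 1) k.succ
      = -(((-1 : ℂ) ^ ((k : ℕ) + 1)) • oneT (qjMat qm L k)) := by
    intro k
    rw [hsucc k, ← neg_smul]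
    congr 1
    rw [Fin.val_succ]
    ring
  rw [Finset.sum_congr rfl fun k _ => this k, Finset.sum_neg_distrib]
  have honeT : ∑ k : Fin L, ((-1 : ℂ) ^ ((k : ℕ) + 1)) • oneT (qjMat qm L k) = oneT (QM qm L) := by
    ext s s'
    simp only [QM, oneT, Matrix.sum_apply, Matrix.smul_apply, smul_eq_mul]
    by_cases h : s 0 = s' 0 <;> simp [h, Finset.mul_sum]
  rw [honeT, sub_eq_add_neg]
  norm_num


lemma eq_cons_iff {n : ℕ} {x : Fin (n + 1) → Fin 2} {a : Fin 2} {w : Fin n → Fin 2} :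
    x = Fin.cons a w ↔ x 0 = a ∧ Fin.tail x = w := by
  constructor
  · rintro rfl; simp
  · rintro ⟨h1, h2⟩; rw [← Fin.cons_self_tail x, h1, h2]

lemma fin2_if_sum (X : Fin 2) (f : Fin 2 → ℂ) :
    (if X = 0 then f 0 else 0) + (if X = 1 then f 1 else 0) = f X := by
  fin_cases X <;> simp

lemma oneT_mul {m n p : ℕ} (A : Matrix (Fin m → Fin 2) (Fin n → Fin 2) ℂ)
    (B : Matrix (Fin n → Fin 2) (Fin p → Fin 2) ℂ) :
    oneT A * oneT B = oneT (A * B) := by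
  ext s s''
  show ∑ s' : Fin (n + 1) → Fin 2, oneT A s s' * oneT B s' s'' = _
  rw [sum_cons]
  simp only [oneT, Matrix.mul_apply, Fin.cons_zero, Fin.tail_cons, ite_mul, zero_mul,
    Finset.sum_ite_eq, Finset.mem_univ, if_true]
  by_cases h : s 0 = s'' 0
  · simp [h, Finset.mul_sum]
  · simp [h]

lemma funext_zero_tail {n : ℕ} {x y : Fin (n + 1) → Fin 2} :
    x = y ↔ x 0 = y 0 ∧ Fin.tail x = Fin.tail y := by
  constructor
  · rintro rfl; exact ⟨rfl, rfl⟩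
  · rintro ⟨h1, h2⟩; rw [← Fin.cons_self_tail x, ← Fin.cons_self_tail y, h1, h2]

lemma cons_apply_one {n : ℕ} (a : Fin 2) (w : Fin (n + 1) → Fin 2) :
    (Fin.cons a w : Fin (n + 2) → Fin 2) 1 = w 0 := by
  rw [← Fin.succ_zero_eq_one, Fin.cons_succ]

@[simp] lemma tail_app_zero {n : ℕ} (x : Fin (n + 2) → Fin 2) : Fin.tail x 0 = x 1 := by
  show x (Fin.succ 0) = x 1
  rw [Fin.succ_zero_eq_one]

@[simp] lemma tail_app_one {n : ℕ} (x : Fin (n + 3) → Fin 2) : Fin.tail x 1 = x 2 := by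
  show x (Fin.succ 1) = x 2
  rw [Fin.succ_one_eq_two]

@[simp] lemma tail_tail_app_zero {n : ℕ} (x : Fin (n + 3) → Fin 2) :
    Fin.tail (Fin.tail x) 0 = x 2 := by rw [tail_app_zero, tail_app_one]

lemma decomp1 {n : ℕ} (j : Fin (n + 1) → Fin 2) : j = Fin.cons (j 0) (Fin.tail j) :=
  (Fin.cons_self_tail j).symm

lemma decomp2 {n : ℕ} (j : Fin (n + 2) → Fin 2) :
    j = Fin.cons (j 0) (Fin.cons (j 1) (Fin.tail (Fin.tail j))) := by
  conv_lhs => rw [decomp1 j, decomp1 (Fin.tail j)]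
  rw [tail_app_zero]

lemma mul_single {I K J : Type*} [Fintype J] [DecidableEq J]
    (A : Matrix I J ℂ) (B : Matrix J K ℂ) (i : I) (k : K) (j₀ : J)
    (h : ∀ j, j ≠ j₀ → A i j * B j k = 0) : (A * B) i k = A i j₀ * B j₀ k := by
  rw [Matrix.mul_apply]
  exact Finset.sum_eq_single j₀ (fun j _ hj => h j hj) (by simp)

lemma mul_pair {I K J : Type*} [Fintype J] [DecidableEq J]
    (A : Matrix I J ℂ) (B : Matrix J K ℂ) (i : I) (k : K) (p : Fin 2 → J)
    (hp : Function.Injective p)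
    (h : ∀ j, (∀ t, j ≠ p t) → A i j * B j k = 0) :
    (A * B) i k = ∑ t : Fin 2, A i (p t) * B (p t) k := by
  rw [Matrix.mul_apply]
  have h1 : ∑ j, A i j * B j k = ∑ j ∈ Finset.univ.image p, A i j * B j k :=
    (Finset.sum_subset (Finset.subset_univ _) (fun j _ hj =>
      h j (fun t ht => hj (Finset.mem_image.mpr ⟨t, Finset.mem_univ t, ht.symm⟩)))).symm
  rw [h1, Finset.sum_image (fun x _ y _ hxy => hp hxy)]

lemma qf_mul_oneT (n : ℕ) (M : Matrix (Fin (n + 1) → Fin 2) (Fin n → Fin 2) ℂ) :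
    qf qm (n + 1) * oneT M = oneT (oneT M) * qf qm n := by
  ext s s''
  have hL : (qf qm (n + 1) * oneT M) s s''
      = qm (s 0) (s 1) (s'' 0) * M (Fin.tail (Fin.tail s)) (Fin.tail s'') := by
    rw [mul_single _ _ _ _ (Fin.cons (s'' 0) (Fin.tail (Fin.tail s)))]
    · simp [qf, oneT, Fin.tail_cons]
    · intro j hj
      by_cases h1 : Fin.tail (Fin.tail s) = Fin.tail j
      · by_cases h2 : j 0 = s'' 0
        · refine absurd ?_ hj
          conv_lhs => rw [decomp1 j]
          rw [h2, ← h1]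
        · simp [oneT, h2]
      · simp [qf, h1]
  have hR : (oneT (oneT M) * qf qm n) s s''
      = M (Fin.tail (Fin.tail s)) (Fin.tail s'') * qm (s 0) (s 1) (s'' 0) := by
    rw [mul_single _ _ _ _ (Fin.cons (s 0) (Fin.cons (s 1) (Fin.tail s'')))]
    · simp [qf, oneT, Fin.tail_cons, cons_apply_one]
    · intro j hj
      by_cases h1 : s 0 = j 0
      · by_cases h2 : s 1 = j 1
        · by_cases h3 : Fin.tail (Fin.tail j) = Fin.tail s''
          · refine absurd ?_ hj
            conv_lhs => rw [decomp2 j]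
            rw [h3, ← h1, ← h2]
          · simp [qf, h3]
        · simp [oneT, h2]
      · simp [oneT, h1]
  rw [hL, hR, mul_comm]

lemma qf_mul_qf (hco : ∀ a b c d : Fin 2,
      ∑ t, qm a b t * qm t c d = ∑ t, qm b c t * qm a t d) (n : ℕ) :
    qf qm (n + 1) * qf qm n = oneT (qf qm n) * qf qm n := by
  ext s s''
  have hL : (qf qm (n + 1) * qf qm n) s s''
      = ∑ t : Fin 2, qm (s 0) (s 1) t *
          (if Fin.tail (Fin.tail (Fin.tail s)) = Fin.tail s'' then qm t (s 2) (s'' 0) else 0) := by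
    rw [mul_pair _ _ _ _ (fun t => Fin.cons t (Fin.tail (Fin.tail s)))
      (fun a b hab => by simpa using congrFun hab 0)]
    · refine Finset.sum_congr rfl fun t _ => ?_
      simp [qf, Fin.tail_cons, cons_apply_one]
    · intro j hj
      by_cases h1 : Fin.tail (Fin.tail s) = Fin.tail j
      · refine absurd ?_ (hj (j 0))
        conv_lhs => rw [decomp1 j]
        rw [← h1]
      · simp [qf, h1]
  have hR : (oneT (qf qm n) * qf qm n) s s''
      = ∑ t : Fin 2, qm (s 1) (s 2) t *
          (if Fin.tail (Fin.tail (Fin.tail s)) = Fin.tail s'' then qm (s 0) t (s'' 0) else 0) := by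
    rw [mul_pair _ _ _ _ (fun t => Fin.cons (s 0) (Fin.cons t (Fin.tail s'')))
      (fun a b hab => by simpa [Fin.tail_cons] using congrFun (congrArg Fin.tail hab) 0)]
    · refine Finset.sum_congr rfl fun t _ => ?_
      by_cases h : Fin.tail (Fin.tail (Fin.tail s)) = Fin.tail s''
      · simp [qf, oneT, Fin.tail_cons, cons_apply_one, h, mul_comm]
      · simp [qf, oneT, Fin.tail_cons, cons_apply_one, h]
    · intro j hj
      by_cases h1 : s 0 = j 0
      · by_cases h3 : Fin.tail (Fin.tail j) = Fin.tail s''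
        · refine absurd ?_ (hj (j 1))
          conv_lhs => rw [decomp2 j]
          rw [h3, ← h1]
        · simp [qf, h3]
      · simp [oneT, h1]
  rw [hL, hR]
  by_cases h : Fin.tail (Fin.tail (Fin.tail s)) = Fin.tail s''
  · simp only [h, if_true]
    exact hco (s 0) (s 1) (s 2) (s'' 0)
  · simp [h]

lemma EM_mul_qf (hcu : ∀ b t : Fin 2, ∑ a, eps a * qm a b t = if b = t then 1 else 0) (n : ℕ) :
    EM eps (n + 1) * qf qm n = 1 := by
  ext s s''
  have hL : (EM eps (n + 1) * qf qm n) s s''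
      = ∑ t : Fin 2, eps t *
          (if Fin.tail s = Fin.tail s'' then qm t (s 0) (s'' 0) else 0) := by
    rw [mul_pair _ _ _ _ (fun t => Fin.cons t s)
      (fun a b hab => by simpa using congrFun hab 0)]
    · refine Finset.sum_congr rfl fun t _ => ?_
      simp [EM, qf, Fin.tail_cons, cons_apply_one]
    · intro j hj
      by_cases h1 : Fin.tail j = s
      · refine absurd ?_ (hj (j 0))
        conv_lhs => rw [decomp1 j]
        rw [h1]
      · simp [EM, h1]
  rw [hL]
  by_cases h : Fin.tail s = Fin.tail s''
  · simp only [h, if_true]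
    rw [hcu (s 0) (s'' 0), Matrix.one_apply]
    by_cases h0 : s 0 = s'' 0
    · rw [if_pos h0, if_pos (funext_zero_tail.mpr ⟨h0, h⟩)]
    · rw [if_neg h0, if_neg (fun he => h0 ((funext_zero_tail.mp he).1))]
  · rw [Matrix.one_apply_ne fun he => h (by rw [he])]
    simp [h]

lemma EM_mul_oneT (n : ℕ) (M : Matrix (Fin (n + 1) → Fin 2) (Fin n → Fin 2) ℂ) :
    EM eps (n + 1) * oneT M = M * EM eps n := by
  ext s s''
  have hL : (EM eps (n + 1) * oneT M) s s'' = eps (s'' 0) * M s (Fin.tail s'') := by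
    rw [mul_single _ _ _ _ (Fin.cons (s'' 0) s)]
    · simp [EM, oneT, Fin.tail_cons]
    · intro j hj
      by_cases h1 : Fin.tail j = s
      · by_cases h2 : j 0 = s'' 0
        · refine absurd ?_ hj
          conv_lhs => rw [decomp1 j]
          rw [h1, h2]
        · simp [oneT, h2]
      · simp [EM, h1]
  have hR : (M * EM eps n) s s'' = M s (Fin.tail s'') * eps (s'' 0) := by
    rw [mul_single _ _ _ _ (Fin.tail s'')]
    · simp [EM]
    · intro j hj
      have h1 : ¬(Fin.tail s'' = j) := fun he => hj he.symm
      simp [EM, h1]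
  rw [hL, hR, mul_comm]

lemma oneT_zero {m n : ℕ} : oneT (0 : Matrix (Fin m → Fin 2) (Fin n → Fin 2) ℂ) = 0 := by
  ext s s'; simp [oneT]

lemma oneT_sub {m n : ℕ} (A B : Matrix (Fin m → Fin 2) (Fin n → Fin 2) ℂ) :
    oneT (A - B) = oneT A - oneT B := by
  ext s s'
  by_cases h : s 0 = s' 0 <;> simp [oneT, h]

lemma oneT_neg {m n : ℕ} (A : Matrix (Fin m → Fin 2) (Fin n → Fin 2) ℂ) :
    oneT (-A) = -oneT A := by
  ext s s'
  by_cases h : s 0 = s' 0 <;> simp [oneT, h]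

lemma Qsq (hco : ∀ a b c d : Fin 2,
      ∑ t, qm a b t * qm t c d = ∑ t, qm b c t * qm a t d) :
    ∀ L : ℕ, QM qm (L + 1) * QM qm L = 0 := by
  intro L
  induction L with
  | zero => rw [QM_zero, Matrix.mul_zero]
  | succ L ih =>
    have e3 : oneT (QM qm (L + 1)) * qf qm L
        = -(oneT (qf qm L) * qf qm L) - oneT (oneT (QM qm L)) * qf qm L := by
      rw [QM_succ qm L, oneT_sub, oneT_neg, Matrix.sub_mul, Matrix.neg_mul]
    have e4 : oneT (QM qm (L + 1)) * oneT (QM qm L) = 0 := by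
      rw [oneT_mul, ih, oneT_zero]
    rw [QM_succ qm (L + 1)]
    nth_rewrite 2 [QM_succ qm L]
    simp only [Matrix.sub_mul, Matrix.mul_sub, Matrix.neg_mul, Matrix.mul_neg, neg_neg,
      sub_neg_eq_add]
    rw [e3, e4, qf_mul_qf qm hco L, qf_mul_oneT qm L (QM qm L)]
    abel

lemma homot (hcu : ∀ b t : Fin 2, ∑ a, eps a * qm a b t = if b = t then 1 else 0) (L : ℕ) :
    QM qm L * EM eps L + EM eps (L + 1) * QM qm (L + 1) = -1 := by
  rw [QM_succ qm L, Matrix.mul_sub, Matrix.mul_neg, EM_mul_qf qm eps hcu L,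
    EM_mul_oneT eps L (QM qm L)]
  abel

end SUSY

open SUSY

/-- if `q u₊ = u₊ ⊗ u₊` and `q u₋ = u₊ ⊗ u₋ + u₋ ⊗ u₊` for a basis
`u₊, u₋` of `ℂ²`, then `ker Q = 0` for `L = 1` and `ker Q = im Q` for every `L ≥ 2`. -/
theorem stmt1 (qm : Fin 2 → Fin 2 → Fin 2 → ℂ) (up um : Fin 2 → ℂ)
    (hbasis : LinearIndependent ℂ ![up, um])
    (hup : ∀ a b : Fin 2, ∑ t : Fin 2, qm a b t * up t = up a * up b)
    (hum : ∀ a b : Fin 2, ∑ t : Fin 2, qm a b t * um t = up a * um b + um a * up b) :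
    LinearMap.ker (Qop qm 1) = ⊥ ∧
      ∀ L : ℕ, 1 ≤ L →
        LinearMap.ker (Qop qm (L + 1)) = LinearMap.range (Qop qm L) := by
  classical
  set A : Matrix (Fin 2) (Fin 2) ℂ := Matrix.of ![up, um] with hAdef
  have hrows : LinearIndependent ℂ (fun i => A i) := hbasis
  have hA : IsUnit A := Matrix.linearIndependent_rows_iff_isUnit.mp hrows
  have hdet : IsUnit A.det := (Matrix.isUnit_iff_isUnit_det A).mp hA
  have hAB : A * A⁻¹ = 1 := Matrix.mul_nonsing_inv A hdet
  have hBA : A⁻¹ * A = 1 := Matrix.nonsing_inv_mul A hdet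
  have ha0 : ∀ j, A 0 j = up j := fun j => rfl
  have ha1 : ∀ j, A 1 j = um j := fun j => rfl
  have hinj : ∀ f : Fin 2 → ℂ,
      (∑ t, f t * up t = 0) → (∑ t, f t * um t = 0) → f = 0 := by
    intro f h0 h1
    have hv : A.mulVec f = 0 := by
      funext i
      fin_cases i
      · show ∑ t, A 0 t * f t = 0
        simp only [ha0]
        rw [← h0]
        exact Finset.sum_congr rfl fun t _ => mul_comm _ _
      · show ∑ t, A 1 t * f t = 0
        simp only [ha1]
        rw [← h1]
        exact Finset.sum_congr rfl fun t _ => mul_comm _ _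
    calc f = (1 : Matrix (Fin 2) (Fin 2) ℂ).mulVec f := by rw [Matrix.one_mulVec]
    _ = A⁻¹.mulVec (A.mulVec f) := by rw [Matrix.mulVec_mulVec, hBA]
    _ = 0 := by rw [hv, Matrix.mulVec_zero]
  set eps : Fin 2 → ℂ := fun a => A⁻¹ a 0 with hepsdef
  have hep : ∑ a, eps a * up a = 1 := by
    have h := congrFun (congrFun hAB 0) 0
    rw [Matrix.mul_apply] at h
    simp only [Matrix.one_apply_eq] at h
    rw [← h]
    exact Finset.sum_congr rfl fun a _ => by rw [ha0, mul_comm]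
  have hem : ∑ a, eps a * um a = 0 := by
    have h := congrFun (congrFun hAB 1) 0
    rw [Matrix.mul_apply] at h
    rw [Matrix.one_apply_ne (by decide : (1 : Fin 2) ≠ 0)] at h
    rw [← h]
    exact Finset.sum_congr rfl fun a _ => by rw [ha1, mul_comm]
  have hswap : ∀ (g : Fin 2 → ℂ) (h : Fin 2 → Fin 2 → ℂ) (v : Fin 2 → ℂ),
      ∑ d, (∑ t, g t * h t d) * v d = ∑ t, g t * ∑ d, h t d * v d := by
    intro g h v
    simp only [Finset.sum_mul, Finset.mul_sum, mul_assoc]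
    exact Finset.sum_comm
  have hcu : ∀ b t : Fin 2, ∑ a, eps a * qm a b t = if b = t then 1 else 0 := by
    intro b t
    have key : (fun t => (∑ a, eps a * qm a b t) - (if b = t then 1 else 0)) = 0 := by
      apply hinj
      · have e1 : ∑ t, (∑ a, eps a * qm a b t) * up t = up b := by
          rw [hswap eps (fun a t => qm a b t) up]
          calc ∑ a, eps a * ∑ t, qm a b t * up t
              = ∑ a, eps a * up a * up b := by
                simp only [hup, mul_assoc]
            _ = up b := by rw [← Finset.sum_mul, hep, one_mul]
        have e2 : ∑ t, (if b = t then (1:ℂ) else 0) * up t = up b := by simp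
        simp only [sub_mul, Finset.sum_sub_distrib, e1, e2, sub_self]
      · have e1 : ∑ t, (∑ a, eps a * qm a b t) * um t = um b := by
          rw [hswap eps (fun a t => qm a b t) um]
          calc ∑ a, eps a * ∑ t, qm a b t * um t
              = ∑ a, (eps a * up a * um b + eps a * um a * up b) := by
                simp only [hum]
                exact Finset.sum_congr rfl fun a _ => by ring
            _ = um b := by
                rw [Finset.sum_add_distrib, ← Finset.sum_mul, ← Finset.sum_mul, hep, hem,
                  one_mul, zero_mul, add_zero]
        have e2 : ∑ t, (if b = t then (1:ℂ) else 0) * um t = um b := by simp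
        simp only [sub_mul, Finset.sum_sub_distrib, e1, e2, sub_self]
    have := congrFun key t
    simp only [Pi.zero_apply] at this
    rw [sub_eq_zero] at this
    exact this
  have hco : ∀ a b c d : Fin 2,
      ∑ t, qm a b t * qm t c d = ∑ t, qm b c t * qm a t d := by
    intro a b c d
    have key : (fun d => (∑ t, qm a b t * qm t c d) - ∑ t, qm b c t * qm a t d) = 0 := by
      apply hinj
      · have e1 : ∑ d, (∑ t, qm a b t * qm t c d) * up d = up a * up b * (up c) := by
          rw [hswap (fun t => qm a b t) (fun t d => qm t c d) up]
          calc ∑ t, qm a b t * ∑ d, qm t c d * up d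
              = ∑ t, qm a b t * up t * up c := by
                simp only [hup, mul_assoc]
            _ = up a * up b * up c := by rw [← Finset.sum_mul, hup]
        have e2 : ∑ d, (∑ t, qm b c t * qm a t d) * up d = up a * up b * up c := by
          rw [hswap (fun t => qm b c t) (fun t d => qm a t d) up]
          calc ∑ t, qm b c t * ∑ d, qm a t d * up d
              = ∑ t, up a * (qm b c t * up t) := by
                simp only [hup]
                exact Finset.sum_congr rfl fun t _ => by ring
            _ = up a * up b * up c := by
                rw [← Finset.mul_sum, hup]; ring
        simp only [sub_mul, Finset.sum_sub_distrib, e1, e2, sub_self]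
      · have e1 : ∑ d, (∑ t, qm a b t * qm t c d) * um d
            = up a * up b * um c + (up a * um b + um a * up b) * up c := by
          rw [hswap (fun t => qm a b t) (fun t d => qm t c d) um]
          calc ∑ t, qm a b t * ∑ d, qm t c d * um d
              = ∑ t, (qm a b t * up t * um c + qm a b t * um t * up c) := by
                simp only [hum]
                exact Finset.sum_congr rfl fun t _ => by ring
            _ = up a * up b * um c + (up a * um b + um a * up b) * up c := by
                rw [Finset.sum_add_distrib, ← Finset.sum_mul, ← Finset.sum_mul, hup, hum]
        have e2 : ∑ d, (∑ t, qm b c t * qm a t d) * um d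
            = up a * (up b * um c + um b * up c) + um a * (up b * up c) := by
          rw [hswap (fun t => qm b c t) (fun t d => qm a t d) um]
          calc ∑ t, qm b c t * ∑ d, qm a t d * um d
              = ∑ t, (up a * (qm b c t * um t) + um a * (qm b c t * up t)) := by
                simp only [hum]
                exact Finset.sum_congr rfl fun t _ => by ring
            _ = up a * (up b * um c + um b * up c) + um a * (up b * up c) := by
                rw [Finset.sum_add_distrib, ← Finset.mul_sum, ← Finset.mul_sum, hup, hum]
        simp only [sub_mul, Finset.sum_sub_distrib, e1, e2]
        ring
    have := congrFun key d
    simp only [Pi.zero_apply] at this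
    rw [sub_eq_zero] at this
    exact this
  -- assembly
  have hQop : ∀ L x, Qop qm L x = (QM qm L).mulVec x := fun L x => rfl
  have hker : ∀ L : ℕ, ∀ x, (QM qm (L + 1)).mulVec x = 0 →
      (QM qm L).mulVec (-(EM eps L).mulVec x) = x := by
    intro L x hx
    have h := congrArg (fun M => M.mulVec x) (homot qm eps hcu L)
    simp only [Matrix.add_mulVec, ← Matrix.mulVec_mulVec, Matrix.neg_mulVec,
      Matrix.one_mulVec] at h
    rw [hx, Matrix.mulVec_zero, add_zero] at h
    rw [Matrix.mulVec_neg, h, neg_neg]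
  constructor
  · apply (Submodule.eq_bot_iff _).mpr
    intro x hx
    have hx0 : (QM qm 1).mulVec x = 0 := hx
    have h := congrArg (fun M => M.mulVec x) (homot qm eps hcu 0)
    simp only [Matrix.add_mulVec, ← Matrix.mulVec_mulVec, Matrix.neg_mulVec,
      Matrix.one_mulVec, QM_zero, Matrix.zero_mulVec] at h
    rw [hx0, Matrix.mulVec_zero] at h
    simpa using h.symm
  · intro L _hL
    ext x
    simp only [LinearMap.mem_ker, LinearMap.mem_range, hQop]
    constructor
    · intro hx
      exact ⟨-(EM eps L).mulVec x, hker L x hx⟩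
    · rintro ⟨y, rfl⟩
      rw [Matrix.mulVec_mulVec, Qsq qm hco L, Matrix.zero_mulVec]
end
end

section
/- Let V = ℂ² and suppose q : V → V ⊗ V is a linear map such that there exist vectors u₊, u₋ forming a basis of V with q(u₊) = 0 and q(u₋) = u₋ ⊗ u₋. Define Q : V^⊗L → V^⊗(L+1) by Q = Σ_{j=1}^L (-1)^j q_j. Then for every L ≥ 1 the cohomology H^L = ker{Q : V^⊗L → V^⊗(L+1)} / im{Q : V^⊗(L-1) → V^⊗L} (with im interpreted as 0 for L = 1) is one-dimensional, spanned by the class of u₊^⊗L. -/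
open Matrix

noncomputable section

/-- `u^⊗L` as a vector of `V^⊗L`. -/
def uPow (u : Fin 2 → ℂ) (L : ℕ) : (Fin L → Fin 2) → ℂ := fun s => ∏ i, u (s i)

/-!
Split `V^⊗(L+1) = u₊ ⊗ V^⊗L ⊕ u₋ ⊗ V^⊗L` along the first factor. Since `q u₊ = 0` and
`q u₋ = u₋ ⊗ u₋`, we get `Q (u₊ ⊗ x) = -u₊ ⊗ Q x` and `Q (u₋ ⊗ x) = -u₋ ⊗ D x` with
`D = Q + u₋ ⊗ (·)`. Contracting the first factor with the `u₋`-coordinate is a contracting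
homotopy for `D`, so the `u₋`-part of a cocycle is a coboundary, and the `u₊`-part is `u₊ ⊗` a
cocycle of length `L`. Induction on `L` leaves only the class of `u₊^⊗(L+1)`.
-/

open Module

lemma Fin.sum_univ_pi_succ {M α : Type*} [AddCommMonoid M] [Fintype α] {n : ℕ}
    (f : (Fin (n + 1) → α) → M) :
    ∑ s, f s = ∑ t, ∑ σ : Fin n → α, f (Fin.cons t σ) := by
  rw [← (Fin.consEquiv fun _ => α).sum_comp, Fintype.sum_prod_type]
  rfl

section TensorFactor

variable {R ι : Type*} [CommSemiring R]

def tens (v : ι → R) {L : ℕ} : ((Fin L → ι) → R) →ₗ[R] ((Fin (L + 1) → ι) → R) where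
  toFun x s := v (s 0) * x (Fin.tail s)
  map_add' x y := by ext s; simp [mul_add]
  map_smul' c x := by ext s; simp [mul_left_comm]

@[simp]
lemma tens_apply_cons (v : ι → R) {L : ℕ} (x : (Fin L → ι) → R) (t : ι) (σ : Fin L → ι) :
    tens v x (Fin.cons t σ) = v t * x σ := by
  simp [tens]

def contract (f : (ι → R) →ₗ[R] R) {L : ℕ} : ((Fin (L + 1) → ι) → R) →ₗ[R] ((Fin L → ι) → R) where
  toFun x σ := f fun t => x (Fin.cons t σ)
  map_add' x y := by ext σ; exact map_add f _ _
  map_smul' c x := by ext σ; exact map_smul f c _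

lemma contract_tens (f : (ι → R) →ₗ[R] R) (v : ι → R) {L : ℕ} (x : (Fin L → ι) → R) :
    contract f (tens v x) = f v • x := by
  ext σ
  have : (fun t => v t * x σ) = x σ • v := by ext t; simp [mul_comm]
  simp [contract, this, mul_comm]

variable {κ : Type*} (b : Basis κ R (ι → R)) {L : ℕ}

@[simp]
lemma contract_coord_tens_self (i : κ) (x : (Fin L → ι) → R) :
    contract (b.coord i) (tens (b i) x) = x := by
  simp [contract_tens]

lemma contract_coord_tens_of_ne {i j : κ} (h : i ≠ j) (x : (Fin L → ι) → R) :
    contract (b.coord i) (tens (b j) x) = 0 := by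
  simp [contract_tens, h]

lemma sum_tens_contract_coord [Fintype κ] (w : (Fin (L + 1) → ι) → R) :
    ∑ i, tens (b i) (contract (b.coord i) w) = w := by
  ext s
  induction s using Fin.consCases with
  | _ t σ => simpa [contract, mul_comm] using congrFun (b.sum_repr fun t => w (Fin.cons t σ)) t

end TensorFactor

lemma uPow_zero (v : Fin 2 → ℂ) : uPow v 0 = 1 := by
  ext; simp [uPow]

lemma uPow_succ (v : Fin 2 → ℂ) (L : ℕ) : uPow v (L + 1) = tens v (uPow v L) := by
  ext s
  induction s using Fin.consCases with
  | _ t σ => simp [uPow, Fin.prod_univ_succ]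

section Supercharge

variable (qm : Fin 2 → Fin 2 → Fin 2 → ℂ)

lemma Qop_apply (L : ℕ) (x : (Fin L → Fin 2) → ℂ) :
    Qop qm L x = ∑ j : Fin L, (-1 : ℂ) ^ ((j : ℕ) + 1) • (qjMat qm L j *ᵥ x) := by
  simp [Qop]

lemma Qop_zero : Qop qm 0 = 0 :=
  LinearMap.ext fun x => by simp [Qop_apply]

lemma qjMat_zero_cons_cons {L : ℕ} (a c t : Fin 2) (ρ σ : Fin L → Fin 2) :
    qjMat qm (L + 1) 0 (Fin.cons a (Fin.cons c ρ)) (Fin.cons t σ) =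
      if σ = ρ then qm a c t else 0 := by
  have hcond : (∀ i : Fin (L + 1), i ≠ 0 →
      (Fin.cons a (Fin.cons c ρ) : Fin (L + 2) → Fin 2) (Fin.succAbove 1 i) =
        (Fin.cons t σ : Fin (L + 1) → Fin 2) i) ↔ σ = ρ := by
    refine ⟨fun h => funext fun m => ?_, fun h i hi => ?_⟩
    · simpa using (h m.succ (Fin.succ_ne_zero m)).symm
    · obtain ⟨m, rfl⟩ := Fin.exists_succ_eq.2 hi
      simp [h]
  simp [qjMat, hcond]

lemma qjMat_succ_cons_cons {L : ℕ} (j : Fin L) (a t : Fin 2) (ρ : Fin (L + 1) → Fin 2)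
    (σ : Fin L → Fin 2) :
    qjMat qm (L + 1) j.succ (Fin.cons a ρ) (Fin.cons t σ) =
      if t = a then qjMat qm L j ρ σ else 0 := by
  have hcond : (∀ i : Fin (L + 1), i ≠ j.succ →
      (Fin.cons a ρ : Fin (L + 2) → Fin 2) (Fin.succAbove j.succ.succ i) =
        (Fin.cons t σ : Fin (L + 1) → Fin 2) i) ↔
      t = a ∧ ∀ i : Fin L, i ≠ j → ρ (Fin.succAbove j.succ i) = σ i := by
    refine ⟨fun h => ⟨?_, fun i hi => ?_⟩, fun h i hi => ?_⟩
    · simpa using (h 0 (Fin.succ_ne_zero j).symm).symm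
    · simpa using h i.succ (by simpa using hi)
    · cases i using Fin.cases with
      | zero => simpa using h.1.symm
      | succ i => simpa using h.2 i (by simpa using hi)
  simp only [qjMat, hcond]
  by_cases ht : t = a <;> simp [ht]

lemma qjMat_zero_mulVec_tens {L : ℕ} (v : Fin 2 → ℂ) (x : (Fin L → Fin 2) → ℂ) (a c : Fin 2)
    (ρ : Fin L → Fin 2) :
    (qjMat qm (L + 1) 0 *ᵥ tens v x) (Fin.cons a (Fin.cons c ρ)) =
      (∑ t, qm a c t * v t) * x ρ := by
  simp only [mulVec, dotProduct, Fin.sum_univ_pi_succ, qjMat_zero_cons_cons, tens_apply_cons,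
    ite_mul, zero_mul, Finset.sum_ite_eq', Finset.mem_univ, if_true, Finset.sum_mul]
  exact Finset.sum_congr rfl fun t _ => by ring

lemma qjMat_succ_mulVec_tens {L : ℕ} (j : Fin L) (v : Fin 2 → ℂ) (x : (Fin L → Fin 2) → ℂ) :
    qjMat qm (L + 1) j.succ *ᵥ tens v x = tens v (qjMat qm L j *ᵥ x) := by
  ext s
  induction s using Fin.consCases with
  | _ a ρ =>
    simp only [mulVec, dotProduct, Fin.sum_univ_pi_succ, qjMat_succ_cons_cons, tens_apply_cons,
      ite_mul, zero_mul, Finset.sum_ite_irrel, Finset.sum_const_zero, Finset.sum_ite_eq',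
      Finset.mem_univ, if_true, Finset.mul_sum]
    exact Finset.sum_congr rfl fun σ _ => by ring

lemma Qop_succ_tens {L : ℕ} (v : Fin 2 → ℂ) (x : (Fin L → Fin 2) → ℂ) :
    Qop qm (L + 1) (tens v x) = -(qjMat qm (L + 1) 0 *ᵥ tens v x) - tens v (Qop qm L x) := by
  simp [Qop_apply, Fin.sum_univ_succ, qjMat_succ_mulVec_tens, pow_succ, map_sum,
    Finset.sum_neg_distrib, sub_eq_add_neg, add_comm]

def Dop (v : Fin 2 → ℂ) (L : ℕ) : ((Fin L → Fin 2) → ℂ) →ₗ[ℂ] ((Fin (L + 1) → Fin 2) → ℂ) :=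
  Qop qm L + tens v

lemma Dop_zero (v : Fin 2 → ℂ) : Dop qm v 0 = tens v := by
  simp [Dop, Qop_zero]

variable {qm}

lemma Qop_tens_of_q_eq_zero {v : Fin 2 → ℂ} (hv : ∀ a c, ∑ t, qm a c t * v t = 0) {L : ℕ}
    (x : (Fin L → Fin 2) → ℂ) : Qop qm (L + 1) (tens v x) = -tens v (Qop qm L x) := by
  have : qjMat qm (L + 1) 0 *ᵥ tens v x = 0 := by
    ext s
    induction s using Fin.consCases with
    | _ a s => induction s using Fin.consCases with
      | _ c ρ => simp [qjMat_zero_mulVec_tens, hv]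
  rw [Qop_succ_tens, this, neg_zero, zero_sub]

lemma Qop_tens_of_q_eq_tens {v : Fin 2 → ℂ} (hv : ∀ a c, ∑ t, qm a c t * v t = v a * v c)
    {L : ℕ} (x : (Fin L → Fin 2) → ℂ) : Qop qm (L + 1) (tens v x) = -tens v (Dop qm v L x) := by
  have : qjMat qm (L + 1) 0 *ᵥ tens v x = tens v (tens v x) := by
    ext s
    induction s using Fin.consCases with
    | _ a s => induction s using Fin.consCases with
      | _ c ρ => simp [qjMat_zero_mulVec_tens, hv, mul_assoc]
  rw [Qop_succ_tens, this, Dop, LinearMap.add_apply, map_add]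
  abel

lemma Dop_Dop_apply {v : Fin 2 → ℂ} (hv : ∀ a c, ∑ t, qm a c t * v t = v a * v c) {L : ℕ}
    (x : (Fin L → Fin 2) → ℂ) : Dop qm v (L + 1) (Dop qm v L x) = Qop qm (L + 1) (Qop qm L x) := by
  simp only [Dop, LinearMap.add_apply, map_add, Qop_tens_of_q_eq_tens hv x]
  abel

lemma Qop_uPow {v : Fin 2 → ℂ} (hv : ∀ a c, ∑ t, qm a c t * v t = 0) (L : ℕ) :
    Qop qm L (uPow v L) = 0 := by
  induction L with
  | zero => simp [Qop_zero]
  | succ L ih => rw [uPow_succ, Qop_tens_of_q_eq_zero hv, ih, map_zero, neg_zero]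

section Cohomology

variable (b : Basis (Fin 2) ℂ (Fin 2 → ℂ)) (hup : ∀ a c, ∑ t, qm a c t * b 0 t = 0)
  (hum : ∀ a c, ∑ t, qm a c t * b 1 t = b 1 a * b 1 c)
include hup hum

lemma Qop_succ_eq {L : ℕ} (w : (Fin (L + 1) → Fin 2) → ℂ) :
    Qop qm (L + 1) w = -tens (b 0) (Qop qm L (contract (b.coord 0) w)) -
      tens (b 1) (Dop qm (b 1) L (contract (b.coord 1) w)) := by
  conv_lhs => rw [← sum_tens_contract_coord b w, Fin.sum_univ_two]
  rw [map_add, Qop_tens_of_q_eq_zero hup, Qop_tens_of_q_eq_tens hum, sub_eq_add_neg]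

lemma Qop_eq_zero_iff {L : ℕ} (w : (Fin (L + 1) → Fin 2) → ℂ) :
    Qop qm (L + 1) w = 0 ↔
      Qop qm L (contract (b.coord 0) w) = 0 ∧ Dop qm (b 1) L (contract (b.coord 1) w) = 0 := by
  rw [Qop_succ_eq b hup hum]
  refine ⟨fun h => ⟨?_, ?_⟩, fun ⟨h₀, h₁⟩ => by simp [h₀, h₁]⟩
  · simpa [contract_coord_tens_of_ne] using congrArg (contract (b.coord 0)) h
  · simpa [contract_coord_tens_of_ne] using congrArg (contract (b.coord 1)) h

lemma Qop_Qop_apply (L : ℕ) (x : (Fin L → Fin 2) → ℂ) : Qop qm (L + 1) (Qop qm L x) = 0 := by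
  induction L with
  | zero => simp [Qop_zero]
  | succ L ih =>
    rw [Qop_succ_eq b hup hum x, map_sub, map_neg, Qop_tens_of_q_eq_zero hup,
      Qop_tens_of_q_eq_tens hum, ih, Dop_Dop_apply hum, ih]
    simp

lemma contract_Dop_add_Dop_contract {L : ℕ} (w : (Fin (L + 1) → Fin 2) → ℂ) :
    contract (b.coord 1) (Dop qm (b 1) (L + 1) w) + Dop qm (b 1) L (contract (b.coord 1) w) =
      w := by
  rw [Dop, LinearMap.add_apply, Qop_succ_eq b hup hum]
  simp [contract_coord_tens_of_ne]

lemma ker_Dop_le_range (L : ℕ) :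
    LinearMap.ker (Dop qm (b 1) (L + 1)) ≤ LinearMap.range (Dop qm (b 1) L) := fun w hw =>
  ⟨contract (b.coord 1) w, by
    simpa [LinearMap.mem_ker.1 hw] using
      contract_Dop_add_Dop_contract b hup hum w⟩

lemma uPow_notMem_range_Qop (L : ℕ) : uPow (b 0) (L + 1) ∉ LinearMap.range (Qop qm L) := by
  induction L with
  | zero =>
    rintro ⟨w, hw⟩
    have := congrFun (congrArg (contract (b.coord 0)) (hw.trans (uPow_succ _ 0))) Fin.elim0
    simp [Qop_zero, uPow_zero] at this
  | succ L ih =>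
    rintro ⟨w, hw⟩
    refine ih ⟨-contract (b.coord 0) w, ?_⟩
    have := congrArg (contract (b.coord 0)) hw
    rw [Qop_succ_eq b hup hum, uPow_succ] at this
    simpa [contract_coord_tens_of_ne] using this

lemma ker_Qop_succ_le (L : ℕ) :
    LinearMap.ker (Qop qm (L + 1)) ≤
      LinearMap.range (Qop qm L) ⊔ Submodule.span ℂ {uPow (b 0) (L + 1)} := by
  induction L with
  | zero =>
    intro x hx
    obtain ⟨-, h₁⟩ := (Qop_eq_zero_iff b hup hum x).1 hx
    have hx₁ : contract (b.coord 1) x = 0 := by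
      simpa [Dop_zero] using congrArg (contract (b.coord 1)) h₁
    have hx₀ : contract (b.coord 0) x = contract (b.coord 0) x Fin.elim0 • uPow (b 0) 0 := by
      ext σ
      simp [uPow_zero, Subsingleton.elim σ Fin.elim0]
    rw [← sum_tens_contract_coord b x, Fin.sum_univ_two, hx₁, hx₀, LinearMap.map_zero, add_zero,
      map_smul, ← uPow_succ]
    exact Submodule.mem_sup_right (Submodule.smul_mem _ _ (Submodule.mem_span_singleton_self _))
  | succ L ih =>
    intro x hx
    obtain ⟨h₀, h₁⟩ := (Qop_eq_zero_iff b hup hum x).1 hx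
    obtain ⟨y, hy⟩ := ker_Dop_le_range b hup hum L h₁
    obtain ⟨_, ⟨a, rfl⟩, _, hc, ha⟩ := Submodule.mem_sup.1 (ih h₀)
    obtain ⟨c, rfl⟩ := Submodule.mem_span_singleton.1 hc
    rw [← sum_tens_contract_coord b x, Fin.sum_univ_two, ← ha, ← hy, map_add, map_smul,
      ← uPow_succ]
    refine Submodule.mem_sup.2 ⟨Qop qm (L + 1) (-tens (b 0) a - tens (b 1) y), ⟨_, rfl⟩,
      c • uPow (b 0) (L + 2), Submodule.smul_mem _ _ (Submodule.mem_span_singleton_self _), ?_⟩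
    rw [map_sub, map_neg, Qop_tens_of_q_eq_zero hup, Qop_tens_of_q_eq_tens hum]
    abel

lemma ker_Qop_succ (L : ℕ) :
    LinearMap.ker (Qop qm (L + 1)) =
      LinearMap.range (Qop qm L) ⊔ Submodule.span ℂ {uPow (b 0) (L + 1)} := by
  refine le_antisymm (ker_Qop_succ_le b hup hum L) (sup_le ?_ ?_)
  · rintro _ ⟨y, rfl⟩
    exact Qop_Qop_apply b hup hum L y
  · rw [Submodule.span_le, Set.singleton_subset_iff]
    exact Qop_uPow hup (L + 1)

end Cohomology

end Supercharge

/-- if `q u₊ = 0` and `q u₋ = u₋ ⊗ u₋` for a basis `u₊, u₋` of `ℂ²`,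
then the cohomology `H^L = ker Q / im Q` (with `im = 0` for `L = 1`) is one-dimensional,
spanned by the class of `u₊^⊗L`, for every `L ≥ 1`. -/
theorem stmt2 (qm : Fin 2 → Fin 2 → Fin 2 → ℂ) (up um : Fin 2 → ℂ)
    (hbasis : LinearIndependent ℂ ![up, um])
    (hup : ∀ a b : Fin 2, ∑ t : Fin 2, qm a b t * up t = 0)
    (hum : ∀ a b : Fin 2, ∑ t : Fin 2, qm a b t * um t = um a * um b) :
    (LinearMap.ker (Qop qm 1) = Submodule.span ℂ {uPow up 1} ∧ uPow up 1 ≠ 0) ∧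
      ∀ L : ℕ, 1 ≤ L →
        (LinearMap.ker (Qop qm (L + 1)) =
            LinearMap.range (Qop qm L) ⊔ Submodule.span ℂ {uPow up (L + 1)} ∧
          uPow up (L + 1) ∉ LinearMap.range (Qop qm L)) := by
  obtain ⟨b, hb⟩ : ∃ b : Basis (Fin 2) ℂ (Fin 2 → ℂ), ⇑b = ![up, um] :=
    ⟨basisOfLinearIndependentOfCardEqFinrank hbasis (by simp),
      coe_basisOfLinearIndependentOfCardEqFinrank _ _⟩
  obtain rfl : up = b 0 := (congrFun hb 0).symm
  obtain rfl : um = b 1 := (congrFun hb 1).symm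
  refine ⟨⟨?_, ?_⟩, fun L _ => ⟨ker_Qop_succ b hup hum L, uPow_notMem_range_Qop b hup hum L⟩⟩
  · simpa [Qop_zero] using ker_Qop_succ b hup hum 0
  · simpa [Qop_zero] using uPow_notMem_range_Qop b hup hum 0
end
end

section
/- Let a,b,c,d be positive reals, and on V⊗V = ℂ²⊗ℂ² let R be the eight-vertex R-matrix with entries (in the ordered basis ↑↑, ↑↓, ↓↑, ↓↓): R = [[a,0,0,d],[0,b,c,0],[0,c,b,0],[d,0,0,a]]. Let K⁺, K⁻ be 2×2 matrices with strictly positive entries. Then every entry of the 2^L × 2^L transfer matrix T = tr₀(K₀⁺ R₀L⋯R₀1 K₀⁻ R₀1⋯R₀L) is strictly positive, for every L ≥ 1. -/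
open Matrix

noncomputable section

/-- The eight-vertex `R`-matrix on `ℂ²⊗ℂ²` (basis order ↑↑, ↑↓, ↓↑, ↓↓; `↑ = 0`):
`[[a,0,0,d],[0,b,c,0],[0,c,b,0],[d,0,0,a]]`. -/
def R8 (a b c d : ℝ) : Matrix (Fin 2 × Fin 2) (Fin 2 × Fin 2) ℝ := fun p q =>
  if p = q then (if p.1 = p.2 then a else b)
  else if p.1 ≠ q.1 ∧ p.2 ≠ q.2 then (if p.1 = p.2 then d else c)
  else 0

/-- `R_{0j}`: the `R`-matrix acting on the auxiliary space and the `j`-th site of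
`V₀ ⊗ V^⊗L`. -/
def R0j (a b c d : ℝ) (L : ℕ) (j : Fin L) :
    Matrix (Fin 2 × (Fin L → Fin 2)) (Fin 2 × (Fin L → Fin 2)) ℝ := fun p q =>
  if ∀ i, i ≠ j → p.2 i = q.2 i then R8 a b c d (p.1, p.2 j) (q.1, q.2 j) else 0

/-- A `K`-matrix acting on the auxiliary space of `V₀ ⊗ V^⊗L`. -/
def K0 (K : Matrix (Fin 2) (Fin 2) ℝ) (L : ℕ) :
    Matrix (Fin 2 × (Fin L → Fin 2)) (Fin 2 × (Fin L → Fin 2)) ℝ := fun p q =>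
  if p.2 = q.2 then K p.1 q.1 else 0

/-- `U = R_{0L} ⋯ R_{01}`. -/
def Umat (a b c d : ℝ) (L : ℕ) :
    Matrix (Fin 2 × (Fin L → Fin 2)) (Fin 2 × (Fin L → Fin 2)) ℝ :=
  (((List.finRange L).reverse).map (R0j a b c d L)).prod

/-- `Ū = R_{01} ⋯ R_{0L}`. -/
def UbarMat (a b c d : ℝ) (L : ℕ) :
    Matrix (Fin 2 × (Fin L → Fin 2)) (Fin 2 × (Fin L → Fin 2)) ℝ :=
  ((List.finRange L).map (R0j a b c d L)).prod

/-- The transfer matrix `T = tr₀(K₀⁺ U K₀⁻ Ū)` on `V^⊗L`. -/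
def Tmat (a b c d : ℝ) (Kp Km : Matrix (Fin 2) (Fin 2) ℝ) (L : ℕ) :
    Matrix (Fin L → Fin 2) (Fin L → Fin 2) ℝ := fun x y =>
  ∑ α : Fin 2,
    (K0 Kp L * Umat a b c d L * K0 Km L * UbarMat a b c d L) (α, x) (α, y)

/-! ### Auxiliary lemmas -/

section Aux

variable {n : Type*} [Fintype n] [DecidableEq n]

/-- All entries of a matrix are nonnegative. -/
def EntryNonneg (A : Matrix n n ℝ) : Prop := ∀ i j, 0 ≤ A i j

lemma entryNonneg_one : EntryNonneg (1 : Matrix n n ℝ) := by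
  intro i j
  by_cases h : i = j <;> simp [Matrix.one_apply, h]

lemma entryNonneg_mul {A B : Matrix n n ℝ} (hA : EntryNonneg A) (hB : EntryNonneg B) :
    EntryNonneg (A * B) := by
  intro i j
  rw [Matrix.mul_apply]
  exact Finset.sum_nonneg fun k _ => mul_nonneg (hA i k) (hB k j)

lemma mul_entry_lb {A B : Matrix n n ℝ} (hA : EntryNonneg A) (hB : EntryNonneg B)
    (i k j : n) : A i k * B k j ≤ (A * B) i j := by
  rw [Matrix.mul_apply]
  exact Finset.single_le_sum (fun t _ => mul_nonneg (hA i t) (hB t j)) (Finset.mem_univ k)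

lemma entryNonneg_listProd : ∀ (l : List (Matrix n n ℝ)), (∀ A ∈ l, EntryNonneg A) →
    EntryNonneg l.prod
  | [], _ => by simpa using (entryNonneg_one (n := n))
  | A :: l, h => by
      rw [List.prod_cons]
      exact entryNonneg_mul (h A (by simp))
        (entryNonneg_listProd l fun B hB => h B (by simp [hB]))

end Aux

variable {a b c d : ℝ}

lemma R8_nonneg (ha : 0 < a) (hb : 0 < b) (hc : 0 < c) (hd : 0 < d) (p q : Fin 2 × Fin 2) :
    0 ≤ R8 a b c d p q := by
  unfold R8; split_ifs <;> linarith

lemma R8_pos (ha : 0 < a) (hb : 0 < b) (hc : 0 < c) (hd : 0 < d) (α s t : Fin 2) :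
    ∃ β, 0 < R8 a b c d (α, s) (β, t) := by
  fin_cases α <;> fin_cases s <;> fin_cases t <;>
    first
      | (refine ⟨0, ?_⟩; norm_num [R8]; assumption)
      | (refine ⟨1, ?_⟩; norm_num [R8]; assumption)

lemma R0j_nonneg (ha : 0 < a) (hb : 0 < b) (hc : 0 < c) (hd : 0 < d) (L : ℕ) (j : Fin L) :
    EntryNonneg (R0j a b c d L j) := by
  intro p q
  unfold R0j
  split_ifs with h
  · exact R8_nonneg ha hb hc hd _ _
  · exact le_refl 0
    
lemma K0_nonneg {K : Matrix (Fin 2) (Fin 2) ℝ} (hK : ∀ i j, 0 < K i j) (L : ℕ) :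
    EntryNonneg (K0 K L) := by
  intro p q
  unfold K0
  split_ifs with h
  · exact (hK _ _).le
  · exact le_refl 0

/-- The key path lemma: a product of `R`-matrices over a list of sites has a positive entry
connecting `x` to `y` provided `x` and `y` agree off the list, for a suitable outgoing
auxiliary state. -/
lemma path_pos (ha : 0 < a) (hb : 0 < b) (hc : 0 < c) (hd : 0 < d) (L : ℕ) :
    ∀ (l : List (Fin L)) (δ : Fin 2) (x y : Fin L → Fin 2),
      (∀ i, i ∉ l → x i = y i) →
      ∃ α, 0 < ((l.map (R0j a b c d L)).prod) (δ, x) (α, y)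
  | [], δ, x, y, h => by
      have hxy : x = y := funext fun i => h i (by simp)
      refine ⟨δ, ?_⟩
      simp [hxy, Matrix.one_apply]
  | j :: l, δ, x, y, h => by
      set z : Fin L → Fin 2 := Function.update x j (y j) with hz
      obtain ⟨β, hβ⟩ := R8_pos ha hb hc hd δ (x j) (y j)
      have hstep : 0 < R0j a b c d L j (δ, x) (β, z) := by
        unfold R0j
        rw [if_pos]
        · simpa [hz, Function.update_self] using hβ
        · intro i hi
          simp [hz, Function.update_of_ne hi]
      have hoff : ∀ i, i ∉ l → z i = y i := by
        intro i hi
        by_cases hij : i = j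
        · subst hij; simp [hz]
        · rw [hz, Function.update_of_ne hij]
          exact h i (by simp [hij, hi])
      obtain ⟨α, hα⟩ := path_pos ha hb hc hd L l β z y hoff
      refine ⟨α, ?_⟩
      rw [List.map_cons, List.prod_cons]
      calc (0:ℝ) < R0j a b c d L j (δ, x) (β, z) * ((l.map (R0j a b c d L)).prod) (β, z) (α, y) :=
            mul_pos hstep hα
        _ ≤ _ := mul_entry_lb (R0j_nonneg ha hb hc hd L j)
            (entryNonneg_listProd _ (by
              intro A hA
              obtain ⟨i, _, rfl⟩ := List.mem_map.mp hA
              exact R0j_nonneg ha hb hc hd L i)) _ _ _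

lemma Umat_nonneg (ha : 0 < a) (hb : 0 < b) (hc : 0 < c) (hd : 0 < d) (L : ℕ) :
    EntryNonneg (Umat a b c d L) :=
  entryNonneg_listProd _ (by
    intro A hA
    obtain ⟨i, _, rfl⟩ := List.mem_map.mp hA
    exact R0j_nonneg ha hb hc hd L i)

lemma UbarMat_nonneg (ha : 0 < a) (hb : 0 < b) (hc : 0 < c) (hd : 0 < d) (L : ℕ) :
    EntryNonneg (UbarMat a b c d L) :=
  entryNonneg_listProd _ (by
    intro A hA
    obtain ⟨i, _, rfl⟩ := List.mem_map.mp hA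
    exact R0j_nonneg ha hb hc hd L i)

/-- for positive vertex weights `a,b,c,d` and `K`-matrices with strictly
positive entries, every entry of the transfer matrix is strictly positive, for L ≥ 1. -/
theorem stmt11 (a b c d : ℝ) (ha : 0 < a) (hb : 0 < b) (hc : 0 < c) (hd : 0 < d)
    (Kp Km : Matrix (Fin 2) (Fin 2) ℝ)
    (hKp : ∀ i j, 0 < Kp i j) (hKm : ∀ i j, 0 < Km i j) :
    ∀ L : ℕ, 1 ≤ L → ∀ x y, 0 < Tmat a b c d Kp Km L x y := by
  intro L _ x y
  -- nonnegativity facts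
  have hU : EntryNonneg (Umat a b c d L) := Umat_nonneg ha hb hc hd L
  have hUb : EntryNonneg (UbarMat a b c d L) := UbarMat_nonneg ha hb hc hd L
  have hKp0 : EntryNonneg (K0 Kp L) := K0_nonneg hKp L
  have hKm0 : EntryNonneg (K0 Km L) := K0_nonneg hKm L
  have hM1 : EntryNonneg (K0 Kp L * Umat a b c d L) := entryNonneg_mul hKp0 hU
  have hM2 : EntryNonneg (K0 Kp L * Umat a b c d L * K0 Km L) := entryNonneg_mul hM1 hKm0
  have hM : EntryNonneg (K0 Kp L * Umat a b c d L * K0 Km L * UbarMat a b c d L) :=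
    entryNonneg_mul hM2 hUb
  -- positive path through Umat (keeping x fixed)
  obtain ⟨γ, hγ⟩ := path_pos ha hb hc hd L ((List.finRange L).reverse) 0 x x (fun _ _ => rfl)
  have hUpos : 0 < Umat a b c d L (0, x) (γ, x) := hγ
  -- positive path through UbarMat from x to y
  obtain ⟨α, hα⟩ := path_pos ha hb hc hd L (List.finRange L) 0 x y
    (fun i hi => absurd (List.mem_finRange i) hi)
  have hUbpos : 0 < UbarMat a b c d L (0, x) (α, y) := hα
  -- the selected entry of the monodromy matrix is positive
  have hKpE : 0 < K0 Kp L (α, x) (0, x) := by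
    unfold K0; rw [if_pos rfl]; exact hKp α 0
  have hKmE : 0 < K0 Km L (γ, x) (0, x) := by
    unfold K0; rw [if_pos rfl]; exact hKm γ 0
  have hEntry : 0 < (K0 Kp L * Umat a b c d L * K0 Km L * UbarMat a b c d L) (α, x) (α, y) := by
    have h1 : 0 < (K0 Kp L * Umat a b c d L) (α, x) (γ, x) :=
      lt_of_lt_of_le (mul_pos hKpE hUpos) (mul_entry_lb hKp0 hU _ _ _)
    have h2 : 0 < (K0 Kp L * Umat a b c d L * K0 Km L) (α, x) (0, x) :=
      lt_of_lt_of_le (mul_pos h1 hKmE) (mul_entry_lb hM1 hKm0 _ _ _)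
    exact lt_of_lt_of_le (mul_pos h2 hUbpos) (mul_entry_lb hM2 hUb _ _ _)
  unfold Tmat
  exact Finset.sum_pos' (fun β _ => hM (β, x) (β, y)) ⟨α, Finset.mem_univ α, hEntry⟩
end
end
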